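/- arXiv:1207.5650 — 4 statements merged into one kernel-verified Lean document; each statement's English description precedes it below -/
import Mathlib

section
/- Let f be differentiable on an open interval containing [a,b] (a < b) with f' integrable on [a,b], let θ, λ ∈ [0,1], q ≥ 1, and set C = (1−λ)a + λb. If |f'|^q is quasi-convex on [a,b], then |(1−θ)(λ f(a) + (1−λ) f(b)) + θ f(C) − (1/(b−a)) ∫_a^b f(x) dx| ≤ (b−a)(θ² − θ + 1/2) [ λ² (max{|f'(a)|^q, |f'(C)|^q})^(1/q) + (1−λ)² (max{|f'(b)|^q, |f'(C)|^q})^(1/q) ]. -/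
/-!
Split `[a, b]` at `C`. On each piece, integrating by parts against the kernel `x - p`, where `p`
divides the piece in the ratio `1 - θ : θ`, turns the left-hand side into `∫ (x - p) f'(x) dx`.
Quasi-convexity of `|f'|^q` bounds `|f'|` on `[a, C]` and on `[C, b]` by the `q`-th roots of the
maxima at the endpoints, and `∫ |x - p| dx` over a piece of length `ℓ` is `(θ² - θ + 1/2) ℓ²`.
-/

open MeasureTheory Set

theorem QuasiconvexOn.le_on_segment {𝕜 E β : Type*} [Semiring 𝕜] [PartialOrder 𝕜]
    [AddCommMonoid E] [LinearOrder β] [SMul 𝕜 E] {s : Set E} {f : E → β}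
    (hf : QuasiconvexOn 𝕜 s f) {x y z : E} (hx : x ∈ s) (hy : y ∈ s) (hz : z ∈ segment 𝕜 x y) :
    f z ≤ max (f x) (f y) :=
  ((hf _).segment_subset ⟨hx, le_max_left _ _⟩ ⟨hy, le_max_right _ _⟩ hz).2

theorem abs_le_rpow_max_of_quasiconvexOn {g : ℝ → ℝ} {s : Set ℝ} {q x y z : ℝ} (hq : 0 < q)
    (hg : QuasiconvexOn ℝ s fun t => |g t| ^ q) (hy : y ∈ s) (hz : z ∈ s)
    (hx : x ∈ segment ℝ y z) :
    |g x| ≤ (max (|g y| ^ q) (|g z| ^ q)) ^ (1 / q) := by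
  have hle := hg.le_on_segment hy hz hx
  rwa [one_div, Real.le_rpow_inv_iff_of_pos (abs_nonneg _)
    ((Real.rpow_nonneg (abs_nonneg _) q).trans hle) hq]

theorem integral_abs_sub_eq {u v p : ℝ} (hup : u ≤ p) (hpv : p ≤ v) :
    ∫ x in u..v, |x - p| = ((p - u) ^ 2 + (v - p) ^ 2) / 2 := by
  have hcont : Continuous fun x : ℝ => |x - p| := by fun_prop
  rw [← intervalIntegral.integral_add_adjacent_intervals (hcont.intervalIntegrable u p)
    (hcont.intervalIntegrable p v)]
  have hleft : ∫ x in u..p, |x - p| = ∫ x in u..p, (p - x) :=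
    intervalIntegral.integral_congr fun x hx => by
      rw [uIcc_of_le hup] at hx
      simp only [abs_sub_comm x p, abs_of_nonneg (sub_nonneg.2 hx.2)]
  have hright : ∫ x in p..v, |x - p| = ∫ x in p..v, (x - p) :=
    intervalIntegral.integral_congr fun x hx => by
      rw [uIcc_of_le hpv] at hx
      simp only [abs_of_nonneg (sub_nonneg.2 hx.1)]
  rw [hleft, hright, intervalIntegral.integral_comp_sub_left (fun x => x),
    intervalIntegral.integral_comp_sub_right (fun x => x)]
  simp only [integral_id]
  ring

theorem abs_sub_integral_le_of_abs_deriv_le {f f' : ℝ → ℝ} {u v p M : ℝ}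
    (hup : u ≤ p) (hpv : p ≤ v) (hf : ∀ x ∈ Icc u v, HasDerivAt f (f' x) x)
    (hf' : IntervalIntegrable f' volume u v) (hM : ∀ x ∈ Icc u v, |f' x| ≤ M) :
    |(v - p) * f v - (u - p) * f u - ∫ x in u..v, f x|
      ≤ ((p - u) ^ 2 + (v - p) ^ 2) / 2 * M := by
  have huv : u ≤ v := hup.trans hpv
  have hparts : ∫ x in u..v, (x - p) * f' x
      = (v - p) * f v - (u - p) * f u - ∫ x in u..v, 1 * f x :=
    intervalIntegral.integral_mul_deriv_eq_deriv_mul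
      (fun x _ => (hasDerivAt_id x).sub_const p) (by rwa [uIcc_of_le huv])
      intervalIntegrable_const hf'
  simp only [one_mul] at hparts
  rw [← hparts, ← integral_abs_sub_eq hup hpv, ← intervalIntegral.integral_mul_const,
    ← Real.norm_eq_abs]
  refine intervalIntegral.norm_integral_le_of_norm_le huv (ae_of_all _ fun x hx => ?_)
    ((by fun_prop : Continuous fun x => |x - p| * M).intervalIntegrable u v)
  rw [norm_mul, Real.norm_eq_abs, Real.norm_eq_abs]
  exact mul_le_mul_of_nonneg_left (hM x (Ioc_subset_Icc_self hx)) (abs_nonneg _)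

theorem abs_convex_comb_sub_integral_le {f f' : ℝ → ℝ} {u v θ M : ℝ} (huv : u ≤ v)
    (hθ : θ ∈ Icc (0 : ℝ) 1) (hf : ∀ x ∈ Icc u v, HasDerivAt f (f' x) x)
    (hf' : IntervalIntegrable f' volume u v) (hM : ∀ x ∈ Icc u v, |f' x| ≤ M) :
    |(v - u) * ((1 - θ) * f u + θ * f v) - ∫ x in u..v, f x|
      ≤ (θ ^ 2 - θ + 1 / 2) * (v - u) ^ 2 * M := by
  have key := abs_sub_integral_le_of_abs_deriv_le (p := u + (1 - θ) * (v - u))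
    (by nlinarith [hθ.2]) (by nlinarith [hθ.1]) hf hf' hM
  convert key using 2 <;> ring

theorem abs_sub_integral_le_of_split {f f' : ℝ → ℝ} {a b C θ M₁ M₂ : ℝ} (haC : a ≤ C)
    (hCb : C ≤ b) (hθ : θ ∈ Icc (0 : ℝ) 1) (hf : ∀ x ∈ Icc a b, HasDerivAt f (f' x) x)
    (hf' : IntervalIntegrable f' volume a b) (hM₁ : ∀ x ∈ Icc a C, |f' x| ≤ M₁)
    (hM₂ : ∀ x ∈ Icc C b, |f' x| ≤ M₂) :
    |(C - a) * ((1 - θ) * f a + θ * f C) + (b - C) * (θ * f C + (1 - θ) * f b)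
        - ∫ x in a..b, f x|
      ≤ (θ ^ 2 - θ + 1 / 2) * ((C - a) ^ 2 * M₁ + (b - C) ^ 2 * M₂) := by
  have hleft : Icc a C ⊆ Icc a b := Icc_subset_Icc_right hCb
  have hright : Icc C b ⊆ Icc a b := Icc_subset_Icc_left haC
  have hcont : ContinuousOn f (Icc a b) := fun x hx => (hf x hx).continuousAt.continuousWithinAt
  have hsplit := intervalIntegral.integral_add_adjacent_intervals
    ((hcont.mono hleft).intervalIntegrable_of_Icc (μ := volume) haC)
    ((hcont.mono hright).intervalIntegrable_of_Icc (μ := volume) hCb)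
  have h₁ := abs_convex_comb_sub_integral_le haC hθ (fun x hx => hf x (hleft hx))
    (hf'.mono_set (by simp only [uIcc_of_le haC, uIcc_of_le (haC.trans hCb), hleft])) hM₁
  have h₂ := abs_convex_comb_sub_integral_le (θ := 1 - θ) hCb
    ⟨sub_nonneg.2 hθ.2, sub_le_self _ hθ.1⟩ (fun x hx => hf x (hright hx))
    (hf'.mono_set (by simp only [uIcc_of_le hCb, uIcc_of_le (haC.trans hCb), hright])) hM₂
  rw [← hsplit]
  calc _ = |((C - a) * ((1 - θ) * f a + θ * f C) - ∫ x in a..C, f x)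
        + ((b - C) * ((1 - (1 - θ)) * f C + (1 - θ) * f b) - ∫ x in C..b, f x)| := by ring_nf
    _ ≤ _ := (abs_add_le _ _).trans (add_le_add h₁ h₂)
    _ = _ := by ring

theorem stmt_4 (f f' : ℝ → ℝ) (a b θ lam q c d : ℝ) (hab : a < b)
    (hθ : θ ∈ Set.Icc (0:ℝ) 1) (hlam : lam ∈ Set.Icc (0:ℝ) 1) (hq : 1 ≤ q)
    (hca : c < a) (hbd : b < d)
    (hf : ∀ x ∈ Set.Ioo c d, HasDerivAt f (f' x) x)
    (hint : IntervalIntegrable f' volume a b)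
    (hqc : ∀ x ∈ Set.Icc a b, ∀ y ∈ Set.Icc a b, ∀ α ∈ Set.Icc (0:ℝ) 1,
      |f' (α * x + (1 - α) * y)| ^ q ≤ max (|f' x| ^ q) (|f' y| ^ q)) :
    |(1 - θ) * (lam * f a + (1 - lam) * f b) + θ * f ((1 - lam) * a + lam * b)
        - (1 / (b - a)) * ∫ x in a..b, f x|
      ≤ (b - a) * (θ ^ 2 - θ + 1 / 2) *
          (lam ^ 2 * (max (|f' a| ^ q) (|f' ((1 - lam) * a + lam * b)| ^ q)) ^ (1 / q)
            + (1 - lam) ^ 2 * (max (|f' b| ^ q) (|f' ((1 - lam) * a + lam * b)| ^ q)) ^ (1 / q)) := by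
  set C := (1 - lam) * a + lam * b
  have haC : a ≤ C := by nlinarith [hlam.1]
  have hCb : C ≤ b := by nlinarith [hlam.2]
  have hq₀ : 0 < q := by linarith
  have hquasi : QuasiconvexOn ℝ (Icc a b) fun x => |f' x| ^ q :=
    quasiconvexOn_iff_le_max.2 ⟨convex_Icc a b, fun x hx y hy α β hα hβ hαβ => by
      simpa only [smul_eq_mul, ← eq_sub_of_add_eq' hαβ] using
        hqc x hx y hy α ⟨hα, by linarith⟩⟩
  have key := abs_sub_integral_le_of_split haC hCb hθ
    (fun x hx => hf x ⟨hca.trans_le hx.1, hx.2.trans_lt hbd⟩) hint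
    (fun x hx => abs_le_rpow_max_of_quasiconvexOn hq₀ hquasi (left_mem_Icc.2 hab.le)
      ⟨haC, hCb⟩ (by rwa [segment_eq_Icc haC]))
    (fun x hx => max_comm (|f' C| ^ q) _ ▸ abs_le_rpow_max_of_quasiconvexOn hq₀ hquasi
      ⟨haC, hCb⟩ (right_mem_Icc.2 hab.le) (by rwa [segment_eq_Icc hCb]))
  have hba : 0 < b - a := sub_pos.2 hab
  rw [show C - a = lam * (b - a) by ring, show b - C = (1 - lam) * (b - a) by ring] at key
  calc _ = |(lam * (b - a) * ((1 - θ) * f a + θ * f C)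
          + (1 - lam) * (b - a) * (θ * f C + (1 - θ) * f b) - ∫ x in a..b, f x) / (b - a)| := by
        congr 1; field_simp; ring
    _ ≤ _ := by
      rw [abs_div, abs_of_pos hba, div_le_iff₀ hba]
      exact key.trans_eq (by ring)
end

section
/- Let f be differentiable on an open interval containing [a,b] (a < b) with f' integrable, let θ, λ ∈ [0,1], and suppose |f'| is quasi-convex on [a,b]. With C = (1−λ)a + λb, we have |(1−θ)(λ f(a) + (1−λ) f(b)) + θ f(C) − (1/(b−a)) ∫_a^b f(x) dx| ≤ (b−a)(θ² − θ + 1/2) [ λ² max{|f'(a)|, |f'(C)|} + (1−λ)² max{|f'(b)|, |f'(C)|} ]. -/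
/-!
Split `[a, b]` at `C`. On a piece `[u, v]`, integrating by parts against the kernel `x - s`
with `s = θ u + (1 - θ) v` turns the error of the weighted endpoint rule
`(v - u) ((1 - θ) f u + θ f v) - ∫ f` into `∫ (x - s) f' x`. Quasi-convexity bounds `|f'|`
on the piece by its larger endpoint value, and `∫ |x - s| = (v - u)² (θ² - θ + 1/2)`.
On `[C, b]` the weight is `1 - θ`, which leaves `θ² - θ + 1/2` unchanged.
-/

open MeasureTheory

theorem QuasiconvexOn.le_max_of_mem_segment {𝕜 E β : Type*} [Semiring 𝕜] [PartialOrder 𝕜]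
    [AddCommMonoid E] [LinearOrder β] [SMul 𝕜 E] {s : Set E} {f : E → β} {x y z : E}
    (hf : QuasiconvexOn 𝕜 s f) (hx : x ∈ s) (hy : y ∈ s) (hz : z ∈ segment 𝕜 x y) :
    f z ≤ max (f x) (f y) :=
  ((hf _).segment_subset ⟨hx, le_max_left _ _⟩ ⟨hy, le_max_right _ _⟩ hz).2

theorem integral_abs_sub_of_mem_Icc {u v s : ℝ} (hus : u ≤ s) (hsv : s ≤ v) :
    ∫ x in u..v, |x - s| = ((s - u) ^ 2 + (v - s) ^ 2) / 2 := by
  have hcont : Continuous fun x : ℝ => |x - s| := by fun_prop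
  have hleft : ∫ x in u..s, |x - s| = ∫ x in u..s, (s - x) :=
    intervalIntegral.integral_congr fun x hx => by
      rw [Set.uIcc_of_le hus] at hx
      simp only [abs_sub_comm x s, abs_of_nonneg (sub_nonneg.2 hx.2)]
  have hright : ∫ x in s..v, |x - s| = ∫ x in s..v, (x - s) :=
    intervalIntegral.integral_congr fun x hx => by
      rw [Set.uIcc_of_le hsv] at hx
      simp only [abs_of_nonneg (sub_nonneg.2 hx.1)]
  rw [← intervalIntegral.integral_add_adjacent_intervals (hcont.intervalIntegrable u s)
    (hcont.intervalIntegrable s v), hleft, hright]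
  simp only [intervalIntegral.integral_sub intervalIntegrable_const
    intervalIntegral.intervalIntegrable_id, intervalIntegral.integral_sub
    intervalIntegral.intervalIntegrable_id intervalIntegrable_const,
    intervalIntegral.integral_const, smul_eq_mul, integral_id]
  ring

theorem abs_sub_integral_le_mul_integral_abs_sub {f f' : ℝ → ℝ} {u v M : ℝ} (s : ℝ)
    (huv : u ≤ v) (hf : ∀ x ∈ Set.Icc u v, HasDerivAt f (f' x) x)
    (hf' : IntervalIntegrable f' volume u v) (hM : ∀ x ∈ Set.Icc u v, |f' x| ≤ M) :
    |(v - s) * f v - (u - s) * f u - ∫ x in u..v, f x| ≤ M * ∫ x in u..v, |x - s| := by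
  have hparts : ∫ x in u..v, (x - s) * f' x
      = (v - s) * f v - (u - s) * f u - ∫ x in u..v, f x := by
    simpa using intervalIntegral.integral_mul_deriv_eq_deriv_mul
      (fun x _ => (hasDerivAt_id x).sub_const s)
      (fun x hx => hf x (by rwa [Set.uIcc_of_le huv] at hx)) intervalIntegrable_const hf'
  rw [← hparts, ← intervalIntegral.integral_const_mul, ← Real.norm_eq_abs]
  have hdom : IntervalIntegrable (fun x => M * |x - s|) volume u v :=
    (by fun_prop : Continuous fun x => M * |x - s|).intervalIntegrable u v
  refine intervalIntegral.norm_integral_le_of_norm_le huv (ae_of_all _ fun x hx => ?_) hdom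
  rw [Real.norm_eq_abs, abs_mul, mul_comm M]
  exact mul_le_mul_of_nonneg_left (hM x ⟨hx.1.le, hx.2⟩) (abs_nonneg _)

theorem abs_weighted_endpoints_sub_integral_le {f f' : ℝ → ℝ} {u v θ M : ℝ} (huv : u ≤ v)
    (hθ : θ ∈ Set.Icc (0 : ℝ) 1) (hf : ∀ x ∈ Set.Icc u v, HasDerivAt f (f' x) x)
    (hf' : IntervalIntegrable f' volume u v) (hM : ∀ x ∈ Set.Icc u v, |f' x| ≤ M) :
    |(v - u) * ((1 - θ) * f u + θ * f v) - ∫ x in u..v, f x|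
      ≤ M * (v - u) ^ 2 * (θ ^ 2 - θ + 1 / 2) := by
  obtain ⟨hθ0, hθ1⟩ := hθ
  have hbound := abs_sub_integral_le_mul_integral_abs_sub (θ * u + (1 - θ) * v) huv hf hf' hM
  rw [integral_abs_sub_of_mem_Icc (by nlinarith) (by nlinarith)] at hbound
  convert hbound using 1
  · congr 1; ring
  · ring

theorem abs_weighted_endpoints_sub_integral_le_of_quasiconvexOn {f f' : ℝ → ℝ}
    {a b u v θ : ℝ} (hau : a ≤ u) (huv : u ≤ v) (hvb : v ≤ b) (hθ : θ ∈ Set.Icc (0 : ℝ) 1)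
    (hf : ∀ x ∈ Set.Icc a b, HasDerivAt f (f' x) x) (hf' : IntervalIntegrable f' volume a b)
    (hquasi : QuasiconvexOn ℝ (Set.Icc a b) fun x => |f' x|) :
    |(v - u) * ((1 - θ) * f u + θ * f v) - ∫ x in u..v, f x|
      ≤ max |f' u| |f' v| * (v - u) ^ 2 * (θ ^ 2 - θ + 1 / 2) := by
  have hsub : Set.Icc u v ⊆ Set.Icc a b := Set.Icc_subset_Icc hau hvb
  refine abs_weighted_endpoints_sub_integral_le huv hθ (fun x hx => hf x (hsub hx))
    (hf'.mono_set ?_) fun x hx => hquasi.le_max_of_mem_segment (hsub ⟨le_rfl, huv⟩)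
      (hsub ⟨huv, le_rfl⟩) (by rwa [segment_eq_Icc huv])
  rw [Set.uIcc_of_le huv, Set.uIcc_of_le (hau.trans (huv.trans hvb))]
  exact hsub

theorem stmt_5 (f f' : ℝ → ℝ) (a b θ lam c d : ℝ) (hab : a < b)
    (hθ : θ ∈ Set.Icc (0:ℝ) 1) (hlam : lam ∈ Set.Icc (0:ℝ) 1)
    (hca : c < a) (hbd : b < d)
    (hf : ∀ x ∈ Set.Ioo c d, HasDerivAt f (f' x) x)
    (hint : IntervalIntegrable f' volume a b)
    (hqc : ∀ x ∈ Set.Icc a b, ∀ y ∈ Set.Icc a b, ∀ α ∈ Set.Icc (0:ℝ) 1,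
      |f' (α * x + (1 - α) * y)| ≤ max |f' x| |f' y|) :
    |(1 - θ) * (lam * f a + (1 - lam) * f b) + θ * f ((1 - lam) * a + lam * b)
        - (1 / (b - a)) * ∫ x in a..b, f x|
      ≤ (b - a) * (θ ^ 2 - θ + 1 / 2) *
          (lam ^ 2 * max (|f' a|) (|f' ((1 - lam) * a + lam * b)|)
            + (1 - lam) ^ 2 * max (|f' b|) (|f' ((1 - lam) * a + lam * b)|)) := by
  obtain ⟨hl0, hl1⟩ := hlam
  set C := (1 - lam) * a + lam * b with hC
  have haC : a ≤ C := by nlinarith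
  have hCb : C ≤ b := by nlinarith
  have hquasi : QuasiconvexOn ℝ (Set.Icc a b) fun x => |f' x| :=
    quasiconvexOn_iff_le_max.2 ⟨convex_Icc a b, fun x hx y hy α β hα hβ hαβ => by
      simpa [← hαβ] using hqc x hx y hy α ⟨hα, by linarith⟩⟩
  have hderiv : ∀ x ∈ Set.Icc a b, HasDerivAt f (f' x) x :=
    fun x hx => hf x ⟨hca.trans_le hx.1, hx.2.trans_lt hbd⟩
  have hleft := abs_weighted_endpoints_sub_integral_le_of_quasiconvexOn le_rfl haC hCb hθ
    hderiv hint hquasi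
  have hright := abs_weighted_endpoints_sub_integral_le_of_quasiconvexOn haC hCb le_rfl
    (Set.mem_Icc.2 ⟨sub_nonneg.2 hθ.2, sub_le_self 1 hθ.1⟩) hderiv hint hquasi
  have hfcont : ContinuousOn f (Set.Icc a b) :=
    fun x hx => (hderiv x hx).continuousAt.continuousWithinAt
  have hsplit : ∫ x in a..b, f x = (∫ x in a..C, f x) + ∫ x in C..b, f x :=
    (intervalIntegral.integral_add_adjacent_intervals
      ((hfcont.mono (Set.Icc_subset_Icc le_rfl hCb)).intervalIntegrable_of_Icc haC)
      ((hfcont.mono (Set.Icc_subset_Icc haC le_rfl)).intervalIntegrable_of_Icc hCb)).symm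
  have hba : 0 < b - a := sub_pos.2 hab
  have hsum :
      (1 - θ) * (lam * f a + (1 - lam) * f b) + θ * f C - 1 / (b - a) * ∫ x in a..b, f x
      = ((C - a) * ((1 - θ) * f a + θ * f C) - (∫ x in a..C, f x)
        + ((b - C) * ((1 - (1 - θ)) * f C + (1 - θ) * f b) - ∫ x in C..b, f x)) / (b - a) := by
    rw [hsplit, hC]; field_simp; ring
  rw [hsum, abs_div, abs_of_pos hba, div_le_iff₀ hba, max_comm |f' b|]
  calc _ ≤ _ := (abs_add_le _ _).trans (add_le_add hleft hright)
    _ = _ := by rw [hC]; ring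
end

section
/- Let a < b be real numbers, n ∈ ℕ with n ≥ 2, θ, λ ∈ [0,1], and q ≥ 1. Then |(1−θ)(λ a^n + (1−λ) b^n) + θ ((1−λ)a + λb)^n − (b^(n+1) − a^(n+1))/((n+1)(b−a))| ≤ (b−a)(θ² − θ + 1/2) n [ λ² (max{|a|^((n−1)q), |(1−λ)a + λb|^((n−1)q)})^(1/q) + (1−λ)² (max{|b|^((n−1)q), |(1−λ)a + λb|^((n−1)q)})^(1/q) ]. -/
/-!
Put `x = (1 - λ) a + λ b`, `c₁ = a + (1 - θ) λ (b - a)`, `c₂ = b - (1 - θ) (1 - λ) (b - a)`.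
For any differentiable `f` with integrable `f'` (here `f t = tⁿ`), integration by parts shows
that `(b - a)` times the expression inside the absolute value equals
`∫ₐˣ (t - c₁) f' t dt + ∫ₓᵇ (t - c₂) f' t dt`.
Bounding `|f'|` by its maximum on each piece, the remaining integrals `∫ |t - cᵢ| dt` are
`(b - a)² (θ² - θ + 1/2)` times `λ²`, resp. `(1 - λ)²`. On `[a, x]` we have
`|f' t| ≤ n max(|a|, |x|)ⁿ⁻¹`, and `max(|a|^((n-1)q), |x|^((n-1)q))^(1/q)` is exactly
`max(|a|, |x|)ⁿ⁻¹`; likewise on `[x, b]`.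
-/

open Set intervalIntegral
open MeasureTheory (volume)

lemma integral_abs_sub {a x c : ℝ} (hac : a ≤ c) (hcx : c ≤ x) :
    ∫ t in a..x, |t - c| = ((c - a) ^ 2 + (x - c) ^ 2) / 2 := by
  have hcont : Continuous fun t : ℝ => |t - c| := by fun_prop
  rw [← integral_add_adjacent_intervals (b := c) (hcont.intervalIntegrable _ _)
    (hcont.intervalIntegrable _ _)]
  have hleft : ∫ t in a..c, |t - c| = ∫ t in a..c, (c - t) := by
    refine integral_congr fun t ht => ?_
    rw [uIcc_of_le hac] at ht
    simp only [abs_of_nonpos (sub_nonpos.2 ht.2), neg_sub]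
  have hright : ∫ t in c..x, |t - c| = ∫ t in c..x, (t - c) := by
    refine integral_congr fun t ht => ?_
    rw [uIcc_of_le hcx] at ht
    exact abs_of_nonneg (sub_nonneg.2 ht.1)
  rw [hleft, hright, integral_sub intervalIntegrable_const intervalIntegral.intervalIntegrable_id,
    integral_sub intervalIntegral.intervalIntegrable_id intervalIntegrable_const]
  simp only [integral_id, intervalIntegral.integral_const, smul_eq_mul]
  ring

lemma integral_sub_mul_deriv {f f' : ℝ → ℝ} {a x : ℝ} (c : ℝ)
    (hf : ∀ t ∈ uIcc a x, HasDerivAt f (f' t) t) (hf' : IntervalIntegrable f' volume a x) :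
    ∫ t in a..x, (t - c) * f' t = (x - c) * f x - (a - c) * f a - ∫ t in a..x, f t := by
  have h := integral_mul_deriv_eq_deriv_mul (u := fun t => t - c) (u' := fun _ => 1)
    (fun t _ => (hasDerivAt_id t).sub_const c) hf intervalIntegrable_const hf'
  simpa only [one_mul] using h

lemma abs_integral_sub_mul_le {g : ℝ → ℝ} {a x c M : ℝ} (hac : a ≤ c) (hcx : c ≤ x)
    (hg : ∀ t ∈ Icc a x, |g t| ≤ M) :
    |∫ t in a..x, (t - c) * g t| ≤ M * (((c - a) ^ 2 + (x - c) ^ 2) / 2) := by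
  calc |∫ t in a..x, (t - c) * g t| ≤ ∫ t in a..x, |t - c| * M := by
        rw [← Real.norm_eq_abs]
        refine norm_integral_le_of_norm_le (hac.trans hcx)
          (Filter.Eventually.of_forall fun t ht => ?_)
          (Continuous.intervalIntegrable (by fun_prop) _ _)
        rw [Real.norm_eq_abs, abs_mul]
        exact mul_le_mul_of_nonneg_left (hg t (Ioc_subset_Icc_self ht)) (abs_nonneg _)
    _ = M * (((c - a) ^ 2 + (x - c) ^ 2) / 2) := by
        rw [integral_mul_const, integral_abs_sub hac hcx, mul_comm]

lemma weighted_sub_average_eq {f f' : ℝ → ℝ} {a b θ lam : ℝ} (hab : a < b)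
    (hlam : lam ∈ Icc (0:ℝ) 1) (hf : ∀ t ∈ Icc a b, HasDerivAt f (f' t) t)
    (hf' : IntervalIntegrable f' volume a b) :
    (1 - θ) * (lam * f a + (1 - lam) * f b) + θ * f ((1 - lam) * a + lam * b)
        - (∫ t in a..b, f t) / (b - a)
      = ((∫ t in a..(1 - lam) * a + lam * b, (t - (a + (1 - θ) * lam * (b - a))) * f' t)
          + ∫ t in (1 - lam) * a + lam * b..b, (t - (b - (1 - θ) * (1 - lam) * (b - a))) * f' t)
        / (b - a) := by
  set x := (1 - lam) * a + lam * b
  have hx : x ∈ Icc a b := ⟨by nlinarith [hlam.1], by nlinarith [hlam.2]⟩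
  have hIcc : uIcc a b = Icc a b := uIcc_of_le hab.le
  have hax : uIcc a x ⊆ uIcc a b := hIcc ▸ uIcc_subset_Icc (left_mem_Icc.2 hab.le) hx
  have hxb : uIcc x b ⊆ uIcc a b := hIcc ▸ uIcc_subset_Icc hx (right_mem_Icc.2 hab.le)
  rw [← hIcc] at hf
  have hfi : IntervalIntegrable f volume a b :=
    ContinuousOn.intervalIntegrable fun t ht => (hf t ht).continuousAt.continuousWithinAt
  rw [integral_sub_mul_deriv _ (fun t ht => hf t (hax ht)) (hf'.mono_set hax),
    integral_sub_mul_deriv _ (fun t ht => hf t (hxb ht)) (hf'.mono_set hxb),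
    ← integral_add_adjacent_intervals (hfi.mono_set hax) (hfi.mono_set hxb)]
  field_simp [(sub_pos.2 hab).ne']
  ring

theorem abs_weighted_sub_average_le {f f' : ℝ → ℝ} {a b θ lam M₁ M₂ : ℝ} (hab : a < b)
    (hθ : θ ∈ Icc (0:ℝ) 1) (hlam : lam ∈ Icc (0:ℝ) 1)
    (hf : ∀ t ∈ Icc a b, HasDerivAt f (f' t) t) (hf' : IntervalIntegrable f' volume a b)
    (hM₁ : ∀ t ∈ Icc a ((1 - lam) * a + lam * b), |f' t| ≤ M₁)
    (hM₂ : ∀ t ∈ Icc ((1 - lam) * a + lam * b) b, |f' t| ≤ M₂) :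
    |(1 - θ) * (lam * f a + (1 - lam) * f b) + θ * f ((1 - lam) * a + lam * b)
        - (∫ t in a..b, f t) / (b - a)|
      ≤ (b - a) * (θ ^ 2 - θ + 1 / 2) * (lam ^ 2 * M₁ + (1 - lam) ^ 2 * M₂) := by
  obtain ⟨hθ0, hθ1⟩ := hθ
  obtain ⟨hl0, hl1⟩ := hlam
  have hba : 0 < b - a := sub_pos.2 hab
  have hθl : 0 ≤ θ * lam * (b - a) := by positivity
  have hθl' : 0 ≤ θ * (1 - lam) * (b - a) := mul_nonneg (mul_nonneg hθ0 (by linarith)) hba.le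
  have hθ'l : 0 ≤ (1 - θ) * lam * (b - a) := mul_nonneg (mul_nonneg (by linarith) hl0) hba.le
  have hθ'l' : 0 ≤ (1 - θ) * (1 - lam) * (b - a) :=
    mul_nonneg (mul_nonneg (by linarith) (by linarith)) hba.le
  have h₁ := abs_integral_sub_mul_le (c := a + (1 - θ) * lam * (b - a))
    (by linarith) (by linarith) hM₁
  have h₂ := abs_integral_sub_mul_le (c := b - (1 - θ) * (1 - lam) * (b - a))
    (by linarith) (by linarith) hM₂
  rw [weighted_sub_average_eq hab ⟨hl0, hl1⟩ hf hf', abs_div, abs_of_pos hba,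
    div_le_iff₀ hba]
  calc _ ≤ _ := (abs_add_le _ _).trans (add_le_add h₁ h₂)
    _ = _ := by ring

lemma max_rpow_mul_rpow_one_div {u v p q : ℝ} (hu : 0 ≤ u) (hv : 0 ≤ v) (hp : 0 ≤ p)
    (hq : 0 < q) : (max (u ^ (p * q)) (v ^ (p * q))) ^ (1 / q) = max u v ^ p := by
  rw [← Real.rpow_max hu hv (by positivity), ← Real.rpow_mul (le_max_of_le_left hu), mul_assoc,
    mul_one_div_cancel hq.ne', mul_one]

lemma abs_natCast_mul_pow_pred_le {n : ℕ} {t K : ℝ} (ht : |t| ≤ K) :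
    |(n : ℝ) * t ^ (n - 1)| ≤ n * K ^ (n - 1) := by
  rw [abs_mul, Nat.abs_cast, abs_pow]
  gcongr

theorem stmt_13 (a b θ lam q : ℝ) (n : ℕ) (hab : a < b) (hn : 2 ≤ n)
    (hθ : θ ∈ Set.Icc (0:ℝ) 1) (hlam : lam ∈ Set.Icc (0:ℝ) 1) (hq : 1 ≤ q) :
    |(1 - θ) * (lam * a ^ n + (1 - lam) * b ^ n) + θ * ((1 - lam) * a + lam * b) ^ n
        - (b ^ (n + 1) - a ^ (n + 1)) / ((n + 1) * (b - a))|
      ≤ (b - a) * (θ ^ 2 - θ + 1 / 2) * n *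
          (lam ^ 2 * (max (|a| ^ (((n : ℝ) - 1) * q)) (|(1 - lam) * a + lam * b| ^ (((n : ℝ) - 1) * q))) ^ (1 / q)
            + (1 - lam) ^ 2 * (max (|b| ^ (((n : ℝ) - 1) * q)) (|(1 - lam) * a + lam * b| ^ (((n : ℝ) - 1) * q))) ^ (1 / q)) := by
  have hpred : (n : ℝ) - 1 = ((n - 1 : ℕ) : ℝ) := by rw [Nat.cast_sub (by omega), Nat.cast_one]
  rw [hpred, max_rpow_mul_rpow_one_div (abs_nonneg _) (abs_nonneg _) (Nat.cast_nonneg _)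
      (by linarith), max_rpow_mul_rpow_one_div (abs_nonneg _) (abs_nonneg _)
      (Nat.cast_nonneg _) (by linarith), Real.rpow_natCast, Real.rpow_natCast,
    ← div_div, ← integral_pow]
  refine (abs_weighted_sub_average_le hab hθ hlam (fun t _ => hasDerivAt_pow n t)
    (Continuous.intervalIntegrable (by fun_prop) _ _)
    (fun t ht => abs_natCast_mul_pow_pred_le (abs_le_max_abs_abs ht.1 ht.2))
    (fun t ht => abs_natCast_mul_pow_pred_le
      ((abs_le_max_abs_abs ht.1 ht.2).trans_eq (max_comm _ _)))).trans_eq ?_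
  ring
end

section
/- Let 0 < a < b, θ, λ ∈ [0,1], and q > 1 with 1/p + 1/q = 1. Then |(1−θ)(λ/a + (1−λ)/b) + θ/((1−λ)a + λb) − (ln b − ln a)/(b−a)| ≤ (b−a) ((θ^(p+1) + (1−θ)^(p+1))/(p+1))^(1/p) [ λ² (max{a^(−2q), ((1−λ)a + λb)^(−2q)})^(1/q) + (1−λ)² (max{b^(−2q), ((1−λ)a + λb)^(−2q)})^(1/q) ]. -/
/-!
On the segment from `u` to `v`, the error `(v - u) (θ/u + (1 - θ)/v) - (log v - log u)` of the
two-point rule for `∫ dx/x` equals `∫₀¹ (θ - t) (v - u)² / (u + t (v - u))² dt` (Peano kernel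
`θ - t`), hence is at most `(v - u)²/u² · ∫₀¹ |θ - t| dt`. Splitting `[a, b]` at
`c = (1 - λ) a + λ b` and applying this on `[a, c]` (weight `1 - θ` at `a`) and on `[c, b]`
(weight `θ` at `c`) bounds the left-hand side by
`(b - a) (λ²/a² + (1 - λ)²/c²) ∫₀¹ |θ - t| dt`. Finally Jensen's inequality gives
`∫₀¹ |θ - t| dt ≤ (∫₀¹ |θ - t|^p dt)^(1/p)`, and `max (x^(-2q)) (y^(-2q)) ^ (1/q) = min x y ^ (-2)`.
-/

open Real Set MeasureTheory intervalIntegral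

lemma integral_abs_one_sub_sub (θ : ℝ) :
    ∫ t in (0:ℝ)..1, |1 - θ - t| = ∫ t in (0:ℝ)..1, |θ - t| := by
  have h := integral_comp_sub_left (fun t => |1 - θ - t|) (1:ℝ) (a := 0) (b := 1)
  rw [sub_self, sub_zero] at h
  rw [← h]
  congr 1 with t
  rw [abs_sub_comm]
  ring_nf

lemma integral_abs_sub_rpow {θ : ℝ} (h0 : 0 ≤ θ) (h1 : θ ≤ 1) {p : ℝ} (hp : 0 ≤ p) :
    ∫ t in (0:ℝ)..1, |θ - t| ^ p = (θ ^ (p + 1) + (1 - θ) ^ (p + 1)) / (p + 1) := by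
  have hcont : Continuous fun t : ℝ => |θ - t| ^ p :=
    (continuous_const.sub continuous_id).abs.rpow_const fun _ => Or.inr hp
  have hpow (x : ℝ) : ∫ t in (0:ℝ)..x, t ^ p = x ^ (p + 1) / (p + 1) := by
    rw [integral_rpow (Or.inl (by linarith)), zero_rpow (by linarith), sub_zero]
  have hleft : ∫ t in (0:ℝ)..θ, |θ - t| ^ p = θ ^ (p + 1) / (p + 1) := by
    rw [integral_congr (g := fun t => (θ - t) ^ p), integral_comp_sub_left (· ^ p) θ,
      sub_self, sub_zero, hpow]
    intro t ht
    rw [uIcc_of_le h0] at ht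
    simp only [abs_of_nonneg (sub_nonneg.mpr ht.2)]
  have hright : ∫ t in θ..1, |θ - t| ^ p = (1 - θ) ^ (p + 1) / (p + 1) := by
    rw [integral_congr (g := fun t => (t - θ) ^ p), integral_comp_sub_right (· ^ p) θ,
      sub_self, hpow]
    intro t ht
    rw [uIcc_of_le h1] at ht
    simp only [abs_sub_comm θ, abs_of_nonneg (sub_nonneg.mpr ht.1)]
  rw [← integral_add_adjacent_intervals (b := θ) (hcont.intervalIntegrable _ _)
    (hcont.intervalIntegrable _ _), hleft, hright, add_div]

lemma integral_le_integral_rpow_rpow_one_div {f : ℝ → ℝ} (hf : ContinuousOn f (Icc 0 1))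
    (hf0 : ∀ t ∈ Icc (0:ℝ) 1, 0 ≤ f t) {p : ℝ} (hp : 1 ≤ p) :
    ∫ t in (0:ℝ)..1, f t ≤ (∫ t in (0:ℝ)..1, f t ^ p) ^ (1 / p) := by
  let μ : Measure ℝ := volume.restrict (Icc 0 1)
  have : IsProbabilityMeasure μ := ⟨by simp [μ]⟩
  have hμ (g : ℝ → ℝ) : ∫ t, g t ∂μ = ∫ t in (0:ℝ)..1, g t := by
    rw [integral_of_le zero_le_one, integral_Icc_eq_integral_Ioc]
  have hjensen : (∫ t, f t ∂μ) ^ p ≤ ∫ t, f t ^ p ∂μ :=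
    (convexOn_rpow hp).map_integral_le
      (continuousOn_id.rpow_const fun _ _ => Or.inr (by linarith)) isClosed_Ici
      ((ae_restrict_iff' measurableSet_Icc).mpr (.of_forall hf0))
      hf.integrableOn_Icc (hf.rpow_const fun _ _ => Or.inr (by linarith)).integrableOn_Icc
  rw [hμ, hμ] at hjensen
  have hint0 : 0 ≤ ∫ t in (0:ℝ)..1, f t :=
    integral_nonneg zero_le_one hf0
  calc ∫ t in (0:ℝ)..1, f t = ((∫ t in (0:ℝ)..1, f t) ^ p) ^ (1 / p) := by
        rw [← rpow_mul hint0, mul_one_div_cancel (by linarith), rpow_one]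
    _ ≤ _ := rpow_le_rpow (by positivity) hjensen (by positivity)

lemma integral_abs_sub_le {θ : ℝ} (h0 : 0 ≤ θ) (h1 : θ ≤ 1) {p : ℝ} (hp : 1 ≤ p) :
    ∫ t in (0:ℝ)..1, |θ - t| ≤ ((θ ^ (p + 1) + (1 - θ) ^ (p + 1)) / (p + 1)) ^ (1 / p) := by
  rw [← integral_abs_sub_rpow h0 h1 (by linarith)]
  exact integral_le_integral_rpow_rpow_one_div
    (continuous_const.sub continuous_id).abs.continuousOn (fun _ _ => abs_nonneg _) hp

lemma integral_sub_mul_sq_div_sq {u v : ℝ} (hu : 0 < u) (hv : 0 < v) (θ : ℝ) :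
    ∫ t in (0:ℝ)..1, (θ - t) * (v - u) ^ 2 / (u + t * (v - u)) ^ 2
      = (v - u) * (θ / u + (1 - θ) / v) - (log v - log u) := by
  have hpos : ∀ t ∈ uIcc (0:ℝ) 1, 0 < u + t * (v - u) := by
    intro t ht
    rw [uIcc_of_le zero_le_one] at ht
    rcases le_total u v with h | h <;>
      nlinarith [mul_nonneg ht.1 (sub_nonneg.mpr h),
        mul_nonneg (sub_nonneg.mpr ht.2) (sub_nonneg.mpr h)]
  have hderiv : ∀ t ∈ uIcc (0:ℝ) 1,
      HasDerivAt (fun t => -((θ - t) * (v - u) / (u + t * (v - u)) + log (u + t * (v - u))))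
        ((θ - t) * (v - u) ^ 2 / (u + t * (v - u)) ^ 2) t := by
    intro t ht
    have hne := (hpos t ht).ne'
    have hline : HasDerivAt (fun t : ℝ => u + t * (v - u)) (v - u) t := by
      simpa using ((hasDerivAt_id t).mul_const (v - u)).const_add u
    have hkernel : HasDerivAt (fun t : ℝ => (θ - t) * (v - u)) (-(v - u)) t := by
      simpa using ((hasDerivAt_id t).const_sub θ).mul_const (v - u)
    refine ((hkernel.div hline hne).add (hline.log hne)).neg.congr_deriv ?_
    field_simp
    ring
  have hcont : ContinuousOn (fun t => (θ - t) * (v - u) ^ 2 / (u + t * (v - u)) ^ 2)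
      (uIcc (0:ℝ) 1) :=
    (by fun_prop : Continuous fun t : ℝ => (θ - t) * (v - u) ^ 2).continuousOn.div
      (by fun_prop) fun t ht => pow_ne_zero 2 (hpos t ht).ne'
  rw [integral_eq_sub_of_hasDerivAt hderiv hcont.intervalIntegrable]
  simp only [one_mul, zero_mul, add_zero, add_sub_cancel]
  field_simp [hu.ne', hv.ne']
  ring

lemma abs_sub_mul_add_div_sub_log_le {u v : ℝ} (hu : 0 < u) (huv : u ≤ v) (θ : ℝ) :
    |(v - u) * (θ / u + (1 - θ) / v) - (log v - log u)|
      ≤ (v - u) ^ 2 / u ^ 2 * ∫ t in (0:ℝ)..1, |θ - t| := by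
  rw [← integral_sub_mul_sq_div_sq hu (hu.trans_le huv) θ, ← intervalIntegral.integral_const_mul]
  have hbound : IntervalIntegrable (fun t => (v - u) ^ 2 / u ^ 2 * |θ - t|) volume 0 1 :=
    Continuous.intervalIntegrable (by fun_prop) 0 1
  refine (norm_eq_abs _).symm.trans_le <|
    intervalIntegral.norm_integral_le_of_norm_le zero_le_one (.of_forall fun t ht => ?_) hbound
  have hu_le : u ^ 2 ≤ (u + t * (v - u)) ^ 2 := by
    nlinarith [mul_nonneg ht.1.le (sub_nonneg.mpr huv)]
  rw [norm_div, norm_mul, Real.norm_eq_abs, norm_of_nonneg (sq_nonneg (v - u)),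
    norm_of_nonneg (sq_nonneg _), mul_comm, mul_div_right_comm]
  exact mul_le_mul_of_nonneg_right
    (div_le_div_of_nonneg_left (sq_nonneg _) (by positivity) hu_le) (abs_nonneg _)

lemma abs_two_point_sub_logMean_le {a b : ℝ} (ha : 0 < a) (hab : a < b) (θ : ℝ)
    {lam : ℝ} (hl0 : 0 ≤ lam) (hl1 : lam ≤ 1) :
    |(1 - θ) * (lam / a + (1 - lam) / b) + θ / ((1 - lam) * a + lam * b)
        - (log b - log a) / (b - a)|
      ≤ (b - a) * (∫ t in (0:ℝ)..1, |θ - t|) *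
          (lam ^ 2 / a ^ 2 + (1 - lam) ^ 2 / ((1 - lam) * a + lam * b) ^ 2) := by
  set c := (1 - lam) * a + lam * b
  set K := ∫ t in (0:ℝ)..1, |θ - t|
  have hca : c - a = lam * (b - a) := by ring
  have hbc : b - c = (1 - lam) * (b - a) := by ring
  have hac : a ≤ c := by nlinarith
  have hcb : c ≤ b := by nlinarith
  have hc : 0 < c := ha.trans_le hac
  have hba : 0 < b - a := sub_pos.mpr hab
  have hleft := abs_sub_mul_add_div_sub_log_le ha hac (1 - θ)
  have hright := abs_sub_mul_add_div_sub_log_le hc hcb θ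
  rw [sub_sub_cancel, integral_abs_one_sub_sub] at hleft
  have hsplit : (b - a) * ((1 - θ) * (lam / a + (1 - lam) / b) + θ / c
        - (log b - log a) / (b - a))
      = ((c - a) * ((1 - θ) / a + θ / c) - (log c - log a))
        + ((b - c) * (θ / c + (1 - θ) / b) - (log b - log c)) := by
    rw [hca, hbc]
    field_simp
    ring
  refine le_of_mul_le_mul_left ?_ hba
  calc (b - a) * |(1 - θ) * (lam / a + (1 - lam) / b) + θ / c - (log b - log a) / (b - a)|
      = |(b - a) * ((1 - θ) * (lam / a + (1 - lam) / b) + θ / c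
          - (log b - log a) / (b - a))| := by rw [abs_mul, abs_of_pos hba]
    _ ≤ (c - a) ^ 2 / a ^ 2 * K + (b - c) ^ 2 / c ^ 2 * K :=
        hsplit ▸ (abs_add_le _ _).trans (add_le_add hleft hright)
    _ = (b - a) * ((b - a) * K * (lam ^ 2 / a ^ 2 + (1 - lam) ^ 2 / c ^ 2)) := by
        rw [hca, hbc]
        ring

lemma rpow_neg_two_mul_rpow_one_div {x : ℝ} (hx : 0 ≤ x) {q : ℝ} (hq : q ≠ 0) :
    (x ^ (-(2 * q))) ^ (1 / q) = 1 / x ^ 2 := by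
  rw [← rpow_mul hx, show -(2 * q) * (1 / q) = -2 by field_simp, rpow_neg hx, one_div]
  norm_cast

lemma max_rpow_neg_two_mul_rpow_one_div {x y : ℝ} (hx : 0 < x) (hxy : x ≤ y) {q : ℝ}
    (hq : 0 < q) : (max (x ^ (-(2 * q))) (y ^ (-(2 * q)))) ^ (1 / q) = 1 / x ^ 2 := by
  rw [max_eq_left (rpow_le_rpow_of_nonpos hx hxy (by linarith)),
    rpow_neg_two_mul_rpow_one_div hx.le hq.ne']

theorem stmt_16 (a b θ lam p q : ℝ) (ha : 0 < a) (hab : a < b)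
    (hθ : θ ∈ Set.Icc (0:ℝ) 1) (hlam : lam ∈ Set.Icc (0:ℝ) 1)
    (hq : 1 < q) (hpq : 1 / p + 1 / q = 1) :
    |(1 - θ) * (lam / a + (1 - lam) / b) + θ / ((1 - lam) * a + lam * b)
        - (Real.log b - Real.log a) / (b - a)|
      ≤ (b - a) * ((θ ^ (p + 1) + (1 - θ) ^ (p + 1)) / (p + 1)) ^ (1 / p) *
          (lam ^ 2 * (max (a ^ (-(2 * q))) (((1 - lam) * a + lam * b) ^ (-(2 * q)))) ^ (1 / q)
            + (1 - lam) ^ 2 * (max (b ^ (-(2 * q))) (((1 - lam) * a + lam * b) ^ (-(2 * q)))) ^ (1 / q)) := by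
  obtain ⟨hθ0, hθ1⟩ := hθ
  obtain ⟨hl0, hl1⟩ := hlam
  have hp : 1 < p :=
    (holderConjugate_iff.mpr ⟨hq, by simpa only [one_div, add_comm] using hpq⟩).symm.lt
  set c := (1 - lam) * a + lam * b
  have hac : a ≤ c := by nlinarith
  have hcb : c ≤ b := by nlinarith
  rw [max_rpow_neg_two_mul_rpow_one_div ha hac (by linarith), max_comm,
    max_rpow_neg_two_mul_rpow_one_div (ha.trans_le hac) hcb (by linarith)]
  calc _ ≤ (b - a) * (∫ t in (0:ℝ)..1, |θ - t|) * (lam ^ 2 / a ^ 2 + (1 - lam) ^ 2 / c ^ 2) :=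
        abs_two_point_sub_logMean_le ha hab θ hl0 hl1
    _ ≤ _ := by
        rw [mul_one_div, mul_one_div]
        gcongr
        exact integral_abs_sub_le hθ0 hθ1 hp.le
end
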